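/- arXiv:2305.09050 — 3 statements merged into one kernel-verified Lean document; each statement's English description precedes it below -/
import Mathlib

section
/- Let f(s) = ∑_{j=0}^N m_j r_j^s be a Dirichlet polynomial with r_0 = 1 > r_1 > ⋯ > r_N > 0 and complex multiplicities with m_0 = 1 (nonzero m_N). Define D_ℓ and D as the unique real solutions of 1 + ∑_{j=1}^{N−1} |m_j| r_j^{D_ℓ} = |m_N| r_N^{D_ℓ} and ∑_{j=1}^{N} |m_j| r_j^{D} = 1, respectively. Then every complex root ω of f satisfies D_ℓ ≤ Re(ω) ≤ D. -/
open Real Finset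

/-!
Since `|r^ω| = r^{Re ω}`, a root `ω` makes the constant `1` equal in modulus to the remaining
terms, so `1 ≤ ∑ |m_j| r_j^{Re ω}`; the right side is strictly decreasing in `Re ω` and equals `1`
at `D`, whence `Re ω ≤ D`. Symmetrically `|m_N| r_N^{Re ω} ≤ 1 + ∑_{j<N} |m_j| r_j^{Re ω}`; after
division by `r_N^{Re ω}` the right side is strictly increasing in `Re ω` (as `r_j ≥ r_N` and
`r_N < 1`), and equality at `D_ℓ` gives `D_ℓ ≤ Re ω`.
-/

variable {ι : Type*}

theorem norm_sum_mul_cpow_le (s : Finset ι) (c : ι → ℂ) {r : ι → ℝ} (hr : ∀ j ∈ s, 0 < r j)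
    (ω : ℂ) : ‖∑ j ∈ s, c j * (r j : ℂ) ^ ω‖ ≤ ∑ j ∈ s, ‖c j‖ * r j ^ ω.re :=
  (norm_sum_le _ _).trans_eq <| sum_congr rfl fun j hj => by
    rw [norm_mul, Complex.norm_cpow_eq_rpow_re_of_pos (hr j hj)]

theorem strictAnti_sum_norm_mul_rpow {s : Finset ι} {c : ι → ℂ} {r : ι → ℝ}
    (hr0 : ∀ j ∈ s, 0 < r j) (hr1 : ∀ j ∈ s, r j < 1) (hc : ∃ j ∈ s, c j ≠ 0) :
    StrictAnti fun x : ℝ => ∑ j ∈ s, ‖c j‖ * r j ^ x := by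
  intro x y hxy
  obtain ⟨k, hk, hck⟩ := hc
  refine sum_lt_sum (fun j hj => ?_) ⟨k, hk, ?_⟩
  · exact mul_le_mul_of_nonneg_left
      (rpow_le_rpow_of_exponent_ge (hr0 j hj) (hr1 j hj).le hxy.le) (norm_nonneg _)
  · exact mul_lt_mul_of_pos_left
      (rpow_lt_rpow_of_exponent_gt (hr0 k hk) (hr1 k hk) hxy) (norm_pos_iff.2 hck)

theorem rpow_le_rpow_mul_rpow_sub_of_le {ρ r x y : ℝ} (hρ : 0 < ρ) (hρr : ρ ≤ r) (hxy : x ≤ y) :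
    r ^ x ≤ r ^ y * ρ ^ (x - y) := by
  have hr : 0 < r := hρ.trans_le hρr
  calc r ^ x = r ^ y * r ^ (x - y) := by rw [← rpow_add hr, add_sub_cancel]
    _ ≤ r ^ y * ρ ^ (x - y) := mul_le_mul_of_nonneg_left
      (rpow_le_rpow_of_nonpos hρ hρr (sub_nonpos.2 hxy)) (rpow_nonneg hr.le _)

theorem one_add_sum_norm_mul_rpow_lt {s : Finset ι} (c : ι → ℂ) {r : ι → ℝ} {ρ x y : ℝ}
    (hρ0 : 0 < ρ) (hρ1 : ρ < 1) (hρr : ∀ j ∈ s, ρ ≤ r j) (hxy : x < y) :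
    1 + ∑ j ∈ s, ‖c j‖ * r j ^ x < (1 + ∑ j ∈ s, ‖c j‖ * r j ^ y) * ρ ^ (x - y) := by
  rw [add_mul, one_mul, sum_mul]
  refine add_lt_add_of_lt_of_le (one_lt_rpow_of_pos_of_lt_one_of_neg hρ0 hρ1 (by linarith))
    (sum_le_sum fun j hj => ?_)
  rw [mul_assoc]
  exact mul_le_mul_of_nonneg_left
    (rpow_le_rpow_mul_rpow_sub_of_le hρ0 (hρr j hj) hxy.le) (norm_nonneg _)

theorem re_le_of_one_add_sum_mul_cpow_eq_zero {s : Finset ι} {c : ι → ℂ} {r : ι → ℝ} {D : ℝ}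
    {ω : ℂ} (hr0 : ∀ j ∈ s, 0 < r j) (hr1 : ∀ j ∈ s, r j < 1)
    (hD : ∑ j ∈ s, ‖c j‖ * r j ^ D = 1) (hω : 1 + ∑ j ∈ s, c j * (r j : ℂ) ^ ω = 0) :
    ω.re ≤ D := by
  have hc : ∃ j ∈ s, c j ≠ 0 := by
    obtain ⟨j, hj, hne⟩ := exists_ne_zero_of_sum_ne_zero (hD ▸ one_ne_zero)
    exact ⟨j, hj, norm_ne_zero_iff.1 (left_ne_zero_of_mul hne)⟩
  have hsum : ∑ j ∈ s, c j * (r j : ℂ) ^ ω = -1 := by linear_combination hω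
  refine (strictAnti_sum_norm_mul_rpow hr0 hr1 hc).le_iff_ge.1 ?_
  calc ∑ j ∈ s, ‖c j‖ * r j ^ D = ‖∑ j ∈ s, c j * (r j : ℂ) ^ ω‖ := by
        rw [hD, hsum, norm_neg, norm_one]
    _ ≤ ∑ j ∈ s, ‖c j‖ * r j ^ ω.re := norm_sum_mul_cpow_le s c hr0 ω

theorem le_re_of_one_add_sum_mul_cpow_eq_zero [DecidableEq ι] {s : Finset ι} {c : ι → ℂ}
    {r : ι → ℝ} {k : ι} {Dl : ℝ} {ω : ℂ} (hk : k ∈ s) (hrk0 : 0 < r k) (hrk1 : r k < 1)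
    (hmin : ∀ j ∈ s, r k ≤ r j)
    (hDl : 1 + ∑ j ∈ s.erase k, ‖c j‖ * r j ^ Dl = ‖c k‖ * r k ^ Dl)
    (hω : 1 + ∑ j ∈ s, c j * (r j : ℂ) ^ ω = 0) :
    Dl ≤ ω.re := by
  by_contra! hlt
  have hmin' : ∀ j ∈ s.erase k, r k ≤ r j := fun j hj => hmin j (mem_of_mem_erase hj)
  have hdom : c k * (r k : ℂ) ^ ω = -(1 + ∑ j ∈ s.erase k, c j * (r j : ℂ) ^ ω) := by
    rw [← sum_erase_add s _ hk] at hω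
    linear_combination hω
  have hroot : ‖c k‖ * r k ^ ω.re ≤ 1 + ∑ j ∈ s.erase k, ‖c j‖ * r j ^ ω.re := by
    rw [← Complex.norm_cpow_eq_rpow_re_of_pos hrk0, ← norm_mul, hdom, norm_neg]
    exact (norm_add_le _ _).trans (add_le_add norm_one.le
      (norm_sum_mul_cpow_le _ c (fun j hj => hrk0.trans_le (hmin' j hj)) ω))
  have hgrowth := one_add_sum_norm_mul_rpow_lt c hrk0 hrk1 hmin' hlt
  rw [hDl, mul_assoc, ← rpow_add hrk0, add_sub_cancel] at hgrowth
  linarith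

theorem dirichlet_polynomial_roots_in_strip_general {n : ℕ}
    (r : Fin (n + 1) → ℝ) (c : Fin (n + 1) → ℂ)
    (hr1 : ∀ j, r j < 1) (hr0 : ∀ j, 0 < r j)
    (hrmono : ∀ i j : Fin (n + 1), i < j → r j < r i)
    (Dl D : ℝ)
    (hDl : 1 + ∑ j ∈ Finset.univ.erase (Fin.last n), ‖c j‖ * r j ^ Dl
            = ‖c (Fin.last n)‖ * r (Fin.last n) ^ Dl)
    (hD : ∑ j, ‖c j‖ * r j ^ D = 1)
    (ω : ℂ) (hω : 1 + ∑ j, c j * (r j : ℂ) ^ ω = 0) :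
    Dl ≤ ω.re ∧ ω.re ≤ D := by
  have hmin : ∀ j ∈ univ, r (Fin.last n) ≤ r j := fun j _ =>
    StrictAnti.antitone hrmono (Fin.le_last j)
  exact ⟨le_re_of_one_add_sum_mul_cpow_eq_zero (mem_univ _) (hr0 _) (hr1 _) hmin hDl hω,
    re_le_of_one_add_sum_mul_cpow_eq_zero (fun j _ => hr0 j) (fun j _ => hr1 j) hD hω⟩

/-- Every complex root of the Dirichlet polynomial `f(s) = 1 + ∑_{j=1}^{N} m_j r_j^s`
(with `1 > r_1 > ⋯ > r_N > 0`, complex multiplicities, `m_N ≠ 0`) lies in the vertical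
strip `D_ℓ ≤ Re(ω) ≤ D`, where `D_ℓ` and `D` are the unique real solutions of
`1 + ∑_{j<N} |m_j| r_j^{D_ℓ} = |m_N| r_N^{D_ℓ}` and `∑_j |m_j| r_j^D = 1`. -/
theorem dirichlet_polynomial_roots_in_strip {n : ℕ}
    (r : Fin (n + 1) → ℝ) (c : Fin (n + 1) → ℂ)
    (hr1 : ∀ j, r j < 1) (hr0 : ∀ j, 0 < r j)
    (hrmono : ∀ i j : Fin (n + 1), i < j → r j < r i)
    (hcN : c (Fin.last n) ≠ 0)
    (Dl D : ℝ)
    (hDl : 1 + ∑ j ∈ Finset.univ.erase (Fin.last n), ‖c j‖ * r j ^ Dl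
            = ‖c (Fin.last n)‖ * r (Fin.last n) ^ Dl)
    (hD : ∑ j, ‖c j‖ * r j ^ D = 1)
    (ω : ℂ) (hω : 1 + ∑ j, c j * (r j : ℂ) ^ ω = 0) :
    Dl ≤ ω.re ∧ ω.re ≤ D :=
  dirichlet_polynomial_roots_in_strip_general r c hr1 hr0 hrmono Dl D hDl hD ω hω
end

section
/- The geometric zeta function of a self-similar fractal string equals L^s ∑_{k=1}^K g_k^s / (1 − ∑_{j=1}^M r_j^s) on the half-plane of convergence: if the lengths of the string are {L g_k r_{j_1} ⋯ r_{j_n} : n ≥ 0, 1 ≤ j_i ≤ M, 1 ≤ k ≤ K} (counted with multiplicity), then for all real s with ∑_{j=1}^M r_j^s < 1 and s > 0, one has ∑_{ℓ ∈ lengths} ℓ^s = L^s (∑_{k=1}^K g_k^s) / (1 − ∑_{j=1}^M r_j^s). -/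
set_option maxHeartbeats 1000000
open Real

lemma listProd_geom {M : ℕ} (q : Fin M → ℝ) (hq : ∀ j, 0 ≤ q j)
    (hlt : ∑ j, q j < 1) :
    HasSum (fun l : List (Fin M) => (l.map q).prod) (1 - ∑ j, q j)⁻¹ := by
  set Q := ∑ j, q j with hQ
  have hQ0 : 0 ≤ Q := Finset.sum_nonneg fun j _ => hq j
  set F : (Σ n, Fin n → Fin M) → ℝ := fun x => ∏ i, q (x.2 i) with hF
  have hnn : ∀ x, 0 ≤ F x := fun ⟨n, v⟩ => Finset.prod_nonneg fun i _ => hq _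
  have hfiber : ∀ n : ℕ, HasSum (fun v : Fin n → Fin M => F ⟨n, v⟩) (Q ^ n) := by
    intro n
    have := hasSum_fintype (fun v : Fin n → Fin M => ∏ i, q (v i))
    rwa [← Fintype.prod_sum (fun (_ : Fin n) (j : Fin M) => q j),
      Finset.prod_const, Finset.card_univ, Fintype.card_fin] at this
  have hsum : Summable F := by
    rw [summable_sigma_of_nonneg hnn]
    refine ⟨fun n => (hfiber n).summable, ?_⟩
    have : (fun n : ℕ => ∑' v : Fin n → Fin M, F ⟨n, v⟩) = fun n => Q ^ n := by
      funext n; exact (hfiber n).tsum_eq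
    rw [this]
    exact summable_geometric_of_lt_one hQ0 hlt
  have htsum : ∑' x, F x = (1 - Q)⁻¹ :=
    (Summable.tsum_sigma' (fun n => (hfiber n).summable) hsum).trans <| by
      calc ∑' n, ∑' v : Fin n → Fin M, F ⟨n, v⟩
          = ∑' n : ℕ, Q ^ n := by
            congr 1; funext n; exact (hfiber n).tsum_eq
        _ = (1 - Q)⁻¹ := tsum_geometric_of_lt_one hQ0 hlt
  have hsig : HasSum F (1 - Q)⁻¹ := htsum ▸ hsum.hasSum
  have heq : HasSum ((fun l : List (Fin M) => (l.map q).prod) ∘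
      (List.equivSigmaTuple (α := Fin M)).symm) (1 - Q)⁻¹ := by
    convert hsig using 1
    funext x
    obtain ⟨n, v⟩ := x
    simp [hF, List.equivSigmaTuple, Function.comp, List.prod_ofFn]
  exact (Equiv.hasSum_iff (List.equivSigmaTuple (α := Fin M)).symm).mp heq

lemma listProd_rpow {M : ℕ} (r : Fin M → ℝ) (hr : ∀ j, 0 < r j) (s : ℝ) :
    ∀ l : List (Fin M), (l.map r).prod ^ s = (l.map fun j => r j ^ s).prod := by
  intro l
  induction l with
  | nil => simp
  | cons a l ih =>
      have hp : 0 ≤ (l.map r).prod := by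
        apply List.prod_nonneg
        intro x hx
        obtain ⟨j, _, rfl⟩ := List.mem_map.mp hx
        exact (hr j).le
      simp only [List.map_cons, List.prod_cons]
      rw [Real.mul_rpow (hr a).le hp, ih]

/-- The geometric zeta function of a self-similar fractal string with scaling ratios
`r_1, …, r_M`, gaps `g_1, …, g_K` and total length `L` equals
`L^s (∑_k g_k^s)/(1 - ∑_j r_j^s)` for real `s > 0` with `∑_j r_j^s < 1`. -/
theorem selfSimilar_geometric_zeta {M K : ℕ} (hM : 2 ≤ M)
    (r : Fin M → ℝ) (g : Fin K → ℝ) (L : ℝ) (hL : 0 < L)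
    (hr : ∀ j, 0 < r j ∧ r j < 1) (hg : ∀ k, 0 < g k ∧ g k < 1)
    (hsum : ∑ j, r j < 1)
    (s : ℝ) (hs : 0 < s) (hconv : ∑ j, r j ^ s < 1) :
    ∑' wk : List (Fin M) × Fin K, (L * g wk.2 * ((wk.1.map r).prod)) ^ s
      = L ^ s * (∑ k, g k ^ s) / (1 - ∑ j, r j ^ s) := by
  have hrpos : ∀ j, 0 < r j := fun j => (hr j).1
  set q : Fin M → ℝ := fun j => r j ^ s with hq
  have hq0 : ∀ j, 0 ≤ q j := fun j => Real.rpow_nonneg (hrpos j).le s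
  have hgeom := listProd_geom q hq0 hconv
  have hB0 : ∀ l : List (Fin M), 0 ≤ (l.map q).prod := fun l => by
    apply List.prod_nonneg
    intro x hx
    obtain ⟨j, _, rfl⟩ := List.mem_map.mp hx
    exact hq0 j
  have hA0 : ∀ k : Fin K, 0 ≤ L ^ s * g k ^ s := fun k =>
    mul_nonneg (Real.rpow_nonneg hL.le s) (Real.rpow_nonneg (hg k).1.le s)
  have hrw : ∀ wk : List (Fin M) × Fin K,
      (L * g wk.2 * ((wk.1.map r).prod)) ^ s
        = (L ^ s * g wk.2 ^ s) * (wk.1.map q).prod := by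
    rintro ⟨l, k⟩
    have hp : 0 ≤ (l.map r).prod := by
      apply List.prod_nonneg
      intro x hx
      obtain ⟨j, _, rfl⟩ := List.mem_map.mp hx
      exact (hrpos j).le
    have hLg : 0 ≤ L * g k := mul_nonneg hL.le (hg k).1.le
    rw [Real.mul_rpow hLg hp, Real.mul_rpow hL.le (hg k).1.le,
      listProd_rpow r hrpos s l]
  have hk : HasSum (fun k : Fin K => L ^ s * g k ^ s)
      (L ^ s * ∑ k, g k ^ s) := by
    have := hasSum_fintype (fun k : Fin K => L ^ s * g k ^ s)
    rwa [← Finset.mul_sum] at this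
  have hsummable : Summable (fun x : Fin K × List (Fin M) =>
      (L ^ s * g x.1 ^ s) * (x.2.map q).prod) := by
    rw [summable_prod_of_nonneg (fun x => mul_nonneg (hA0 x.1) (hB0 x.2))]
    constructor
    · intro k
      simpa using hgeom.summable.mul_left (L ^ s * g k ^ s)
    · exact (hasSum_fintype _).summable
  have hmul : HasSum (fun x : Fin K × List (Fin M) =>
      (L ^ s * g x.1 ^ s) * (x.2.map q).prod)
      ((L ^ s * ∑ k, g k ^ s) * (1 - ∑ j, q j)⁻¹) :=
    hk.mul hgeom hsummable
  have hprod : HasSum (fun wk : List (Fin M) × Fin K =>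
      (L ^ s * g wk.2 ^ s) * (wk.1.map q).prod)
      ((L ^ s * ∑ k, g k ^ s) * (1 - ∑ j, q j)⁻¹) :=
    (Equiv.hasSum_iff (Equiv.prodComm (List (Fin M)) (Fin K)).symm).mp hmul
  calc ∑' wk : List (Fin M) × Fin K, (L * g wk.2 * ((wk.1.map r).prod)) ^ s
      = ∑' wk : List (Fin M) × Fin K,
          (L ^ s * g wk.2 ^ s) * (wk.1.map q).prod := by
        congr 1; funext wk; exact hrw wk
    _ = (L ^ s * ∑ k, g k ^ s) * (1 - ∑ j, q j)⁻¹ := hprod.tsum_eq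
    _ = L ^ s * (∑ k, g k ^ s) / (1 - ∑ j, r j ^ s) := by
        rw [mul_assoc, ← div_eq_mul_inv, mul_div_assoc]
end

section
/- The set of complex dimensions of any lattice self-similar fractal string is a rank-1 ideal crystal in ℝ^2 ≅ ℂ: there exist finitely many complex numbers ω_1, …, ω_d and a positive real number p such that the set of complex dimensions equals {ω_u + i n p : n ∈ ℤ, 1 ≤ u ≤ d}, i.e., it is of the form T(pℤ) + F for the finite set F = {ω_1, …, ω_d} ⊂ ℝ^2, where T(t) = (0, t). -/
open Real

/-- The set of complex dimensions of any lattice self-similar fractal string (the roots of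
the associated lattice Dirichlet polynomial `f(s) = 1 - ∑ m_j r^{k_j s}`, with multiplicative
generator `r ∈ (0,1)` and positive integer multiplicities) is a rank-1 ideal crystal in
`ℂ ≅ ℝ²`: there are finitely many `ω_1, …, ω_d` with root set
`{ω_u + inp : n ∈ ℤ, 1 ≤ u ≤ d}`, where `p = 2π/log(1/r)` is the oscillatory period. -/
theorem complex_dimensions_lattice_string_ideal_crystal {N : ℕ} (hN : 0 < N)
    (r : ℝ) (hr0 : 0 < r) (hr1 : r < 1)
    (k : Fin N → ℕ) (hk : ∀ j, 0 < k j) (hkmono : StrictMono k)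
    (m : Fin N → ℕ) (hm : ∀ j, 0 < m j)
    (f : ℂ → ℂ) (hf : f = fun s => 1 - ∑ j, (m j : ℂ) * (r : ℂ) ^ ((k j : ℂ) * s))
    (p : ℝ) (hp : p = 2 * π / Real.log (1 / r)) :
    ∃ (d : ℕ) (ω : Fin d → ℂ),
      {s : ℂ | f s = 0} = ⋃ u : Fin d,
        {s : ℂ | ∃ n : ℤ, s = ω u + Complex.I * (n : ℂ) * (p : ℂ)} := by
  subst hf
  set L : ℝ := Real.log r with hL
  have hLneg : L < 0 := Real.log_neg hr0 hr1
  have hLne : L ≠ 0 := ne_of_lt hLneg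
  have hLcne : (L : ℂ) ≠ 0 := by exact_mod_cast hLne
  have hpc : (p : ℂ) = -(2 * π / L) := by
    rw [hp, one_div, Real.log_inv]
    push_cast
    ring
  -- the lattice Dirichlet polynomial
  set P : Polynomial ℂ := 1 - ∑ j, Polynomial.C (m j : ℂ) * Polynomial.X ^ (k j) with hP
  have hPeval : ∀ w : ℂ, P.eval w = 1 - ∑ j, (m j : ℂ) * w ^ (k j) := by
    intro w
    simp [hP, Polynomial.eval_finset_sum]
  have hP0 : P.eval 0 = 1 := by
    rw [hPeval]
    have : ∀ j : Fin N, (m j : ℂ) * (0 : ℂ) ^ (k j) = 0 := by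
      intro j
      rw [zero_pow (hk j).ne', mul_zero]
    simp [this]
  have hPne : P ≠ 0 := by
    intro h
    rw [h] at hP0
    simp at hP0
  -- key substitution: f s = P (exp (s * L))
  have key : ∀ s : ℂ, (1 - ∑ j, (m j : ℂ) * (r : ℂ) ^ ((k j : ℂ) * s))
      = P.eval (Complex.exp (s * L)) := by
    intro s
    rw [hPeval]
    congr 1
    refine Finset.sum_congr rfl fun j _ => ?_
    congr 1
    rw [← Complex.exp_nat_mul]
    rw [Complex.cpow_def_of_ne_zero (by exact_mod_cast hr0.ne')]
    congr 1
    rw [← Complex.ofReal_log hr0.le]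
    push_cast
    ring
  set l := P.roots.toList with hl
  refine ⟨l.length, fun u => Complex.log (l.get u) / L, ?_⟩
  ext s
  simp only [Set.mem_setOf_eq, Set.mem_iUnion]
  rw [key s]
  constructor
  · intro hs
    have hwne : Complex.exp (s * L) ≠ 0 := Complex.exp_ne_zero _
    have hmem : Complex.exp (s * L) ∈ P.roots := by
      rw [Polynomial.mem_roots hPne]
      exact hs
    have hmem' : Complex.exp (s * L) ∈ l := (Multiset.mem_toList ..).2 hmem
    obtain ⟨u, hu⟩ := List.mem_iff_get.mp hmem'
    refine ⟨u, ?_⟩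
    have hexp : Complex.exp (s * L) = Complex.exp (Complex.log (l.get u)) := by
      rw [Complex.exp_log (hu ▸ hwne)]
      exact hu.symm
    obtain ⟨n, hn⟩ := Complex.exp_eq_exp_iff_exists_int.mp hexp
    refine ⟨-n, ?_⟩
    rw [hpc]
    push_cast
    field_simp at hn ⊢
    linear_combination hn
  · rintro ⟨u, n, rfl⟩
    have hmem : l.get u ∈ P.roots := (Multiset.mem_toList ..).1 (l.get_mem ..)
    have hwne : l.get u ≠ 0 := by
      intro h0
      have := (Polynomial.mem_roots hPne).1 hmem
      rw [h0] at this
      rw [Polynomial.IsRoot, hP0] at this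
      exact one_ne_zero this
    have heval : P.eval (l.get u) = 0 := (Polynomial.mem_roots hPne).1 hmem
    have hexp : Complex.exp ((Complex.log (l.get u) / L + Complex.I * (n : ℂ) * (p : ℂ)) * L)
        = l.get u := by
      rw [hpc]
      have : (Complex.log (l.get u) / (L : ℂ) + Complex.I * (n : ℂ) * (-(2 * π / L))) * L
          = Complex.log (l.get u) + (-n : ℤ) * (2 * π * Complex.I) := by
        push_cast
        field_simp
      rw [this, Complex.exp_add, Complex.exp_int_mul_two_pi_mul_I,
        Complex.exp_log hwne, mul_one]
    rw [hexp]
    exact heval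
end
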